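/- Let D ≥ 4, J ≥ 1, k ≥ 0, ℓ ≥ J + kD be integers. Let C = 2kJ + Dk(k+1) − 2k + 2(ℓ−1), let S = ℓ − 1, and let E = kJ + k(kD+1)/2 (a rational number). Then C ≤ 2S + 4E. -/
import Mathlib

/-- Lemma 2, main inequality for `D ≥ 4`: the line-clearing cost is at most
twice the snow lower bound plus four times the distance lower bound. -/
theorem line_clearing_bound_D_ge_four (D J k ℓ : ℤ)
    (hD : 4 ≤ D) (hJ : 1 ≤ J) (hk : 0 ≤ k) (hℓ : J + k * D ≤ ℓ) :
    ((2 * k * J + D * k * (k + 1) - 2 * k + 2 * (ℓ - 1) : ℤ) : ℚ)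
      ≤ 2 * ((ℓ - 1 : ℤ) : ℚ)
        + 4 * ((k : ℚ) * J + (k : ℚ) * ((k : ℚ) * D + 1) / 2) := by
  have hD' : (4:ℚ) ≤ D := by exact_mod_cast hD
  have hJ' : (1:ℚ) ≤ J := by exact_mod_cast hJ
  have hk' : (0:ℚ) ≤ k := by exact_mod_cast hk
  push_cast
  rcases hk.lt_or_eq with h1 | h1
  · have hk1 : (1:ℚ) ≤ k := by exact_mod_cast h1
    nlinarith [mul_nonneg (mul_nonneg hk' (by linarith : (0:ℚ) ≤ D - 4)) (by linarith : (0:ℚ) ≤ (k:ℚ) - 1), mul_nonneg hk' (sub_nonneg.2 hJ'), sq_nonneg ((k:ℚ))]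
  · have : (k:ℚ) = 0 := by exact_mod_cast h1.symm
    rw [this]; ring_nf; linarith
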